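/- Under the hypotheses of the GRP-coefficient bound (u_K, u_L ∈ ℝ, j := u_L − u_K ≠ 0, minmod-admissible slopes g_K, g_L ∈ co{0,j}, r⁻ := u_K + g_K/2, r⁺ := u_L − g_L/2, D := (f^EC(u_K,u_L) − f^God(r⁻,r⁺))/j, ν ≥ 0, g ∈ co{0,j}, |r| ≤ max(|u_K|,|u_L|), D_σ := D + ν·r²·g/j), let C₁ ∈ (0, 1/24] and define the stabilized coefficient D^New := D_σ + (1/24 + C₁)·|j| if j < 0, and D^New := D_σ if j > 0. Then C₁·|j| ≤ D^New ≤ (1/6)·|j| + (7/8)·max(|u_K|, |u_L|) + ν·max(u_K², u_L²). In particular the stabilized GRP flux is entropy stable. -/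

import Mathlib

/-- Second-order entropy-conservative numerical flux for the Burgers equation. -/
noncomputable def fEC (a b : ℝ) : ℝ := (1/24) * (12 * ((a + b)/2)^2 + (b - a)^2)

/-- Godunov flux for the Burgers equation. -/
noncomputable def fGod (a b : ℝ) : ℝ := (1/2) * max ((max a 0)^2) ((min b 0)^2)

/-!
Write `m = (u_K + u_L)/2` and `M = max |u_K| |u_L|`. Then `f^EC(u_K, u_L) = m²/2 + j²/24`, and
the minmod slopes place the reconstructed states between the cell values and `m`. For a shock
(`j < 0`) the Godunov flux lies between `m²/2` and `M²/2 ≤ m²/2 + |j| M / 2`; for a rarefaction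
(`j > 0`) it lies between `m²/2 - j |m| / 2 - j²/8` and `m²/2`. Dividing by `j` gives
`j/24 ≤ D ≤ j/24 + M/2` resp. `j/24 ≤ D ≤ j/6 + M/2`, while the GRP correction `ν r² g / j` lies
in `[0, ν max(u_K², u_L²)]` because `g / j ∈ [0, 1]`. The added viscosity exactly compensates the
negative lower bound `j/24` in the shock case.
-/

open Set

lemma fEC_eq (a b : ℝ) : fEC a b = ((a + b) / 2) ^ 2 / 2 + (b - a) ^ 2 / 24 := by
  unfold fEC; ring

lemma fGod_nonneg (a b : ℝ) : 0 ≤ fGod a b := by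
  unfold fGod; positivity

lemma half_sq_le_fGod_left {a : ℝ} (b : ℝ) (ha : 0 ≤ a) : a ^ 2 / 2 ≤ fGod a b := by
  unfold fGod
  rw [max_eq_left ha]
  linarith [le_max_left (a ^ 2) (min b 0 ^ 2)]

lemma half_sq_le_fGod_right (a : ℝ) {b : ℝ} (hb : b ≤ 0) : b ^ 2 / 2 ≤ fGod a b := by
  unfold fGod
  rw [min_eq_left hb]
  linarith [le_max_right (max a 0 ^ 2) (b ^ 2)]

lemma fGod_le_of_abs_le {a b M : ℝ} (ha : |a| ≤ M) (hb : |b| ≤ M) : fGod a b ≤ M ^ 2 / 2 := by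
  have h₁ : max a 0 ^ 2 ≤ M ^ 2 :=
    sq_le_sq' (by linarith [le_max_right a 0, (abs_nonneg a).trans ha])
      (max_le (le_abs_self a |>.trans ha) ((abs_nonneg a).trans ha))
  have h₂ : min b 0 ^ 2 ≤ M ^ 2 :=
    sq_le_sq' (le_min (neg_abs_le b |>.trans' (neg_le_neg hb)) (by linarith [(abs_nonneg b).trans hb]))
      (by linarith [min_le_right b 0, (abs_nonneg b).trans hb])
  unfold fGod
  linarith [max_le h₁ h₂]

/-- For a rising pair the Godunov flux is the minimum of `u²/2` over `[a, b]`. -/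
lemma fGod_le_half_sq_of_le_of_le {a b c : ℝ} (hac : a ≤ c) (hcb : c ≤ b) :
    fGod a b ≤ c ^ 2 / 2 := by
  have h₁ : max a 0 ^ 2 ≤ c ^ 2 := by
    rcases le_total a 0 with h | h
    · rw [max_eq_right h]; nlinarith [sq_nonneg c]
    · rw [max_eq_left h]; nlinarith
  have h₂ : min b 0 ^ 2 ≤ c ^ 2 := by
    rcases le_total b 0 with h | h
    · rw [min_eq_left h]; nlinarith
    · rw [min_eq_right h]; nlinarith [sq_nonneg c]
  unfold fGod
  linarith [max_le h₁ h₂]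

lemma half_sq_le_fGod_of_le_of_le {a b c : ℝ} (hbc : b ≤ c) (hca : c ≤ a) :
    c ^ 2 / 2 ≤ fGod a b := by
  rcases le_total 0 c with h | h
  · nlinarith [half_sq_le_fGod_left b (h.trans hca)]
  · nlinarith [half_sq_le_fGod_right a (hbc.trans h)]

lemma half_sq_sub_le_fGod {a b c δ : ℝ} (hac : a ≤ c) (hcb : c ≤ b) (hca : c - a ≤ δ)
    (hbc : b - c ≤ δ) : c ^ 2 / 2 - δ * |c| - δ ^ 2 / 2 ≤ fGod a b := by
  rcases lt_or_ge 0 a with ha | ha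
  · rw [abs_of_pos (ha.trans_le hac)]
    nlinarith [half_sq_le_fGod_left b ha.le, mul_nonneg ha.le (sub_nonneg.2 hca),
      mul_nonneg (sub_nonneg.2 hac) (sub_nonneg.2 hca)]
  rcases lt_or_ge b 0 with hb | hb
  · rw [abs_of_neg (hcb.trans_lt hb)]
    nlinarith [half_sq_le_fGod_right a hb.le, mul_nonneg (neg_nonneg.2 hb.le) (sub_nonneg.2 hbc),
      mul_nonneg (sub_nonneg.2 hcb) (sub_nonneg.2 hbc)]
  · have hc : |c| ≤ δ := abs_le.2 ⟨by linarith, by linarith⟩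
    nlinarith [fGod_nonneg a b, abs_nonneg c]

lemma abs_midpoint_le_max_abs (a b : ℝ) : |(a + b) / 2| ≤ max |a| |b| := by
  rw [abs_le]
  constructor <;>
    linarith [neg_abs_le a, neg_abs_le b, le_abs_self a, le_abs_self b,
      le_max_left |a| |b|, le_max_right |a| |b|]

lemma sq_max_abs_le_sq_midpoint_add (a b : ℝ) :
    max |a| |b| ^ 2 ≤ ((a + b) / 2) ^ 2 + |b - a| * max |a| |b| := by
  have hM : max |a| |b| ≤ |(a + b) / 2| + |b - a| / 2 := by
    have hj : |(b - a) / 2| = |b - a| / 2 := by rw [abs_div, abs_two]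
    refine max_le ?_ ?_
    · calc |a| = |(a + b) / 2 - (b - a) / 2| := congrArg abs (by ring)
        _ ≤ |(a + b) / 2| + |b - a| / 2 := hj ▸ abs_sub _ _
    · calc |b| = |(a + b) / 2 + (b - a) / 2| := congrArg abs (by ring)
        _ ≤ |(a + b) / 2| + |b - a| / 2 := hj ▸ abs_add_le _ _
  have hm := abs_midpoint_le_max_abs a b
  nlinarith [sq_abs ((a + b) / 2), abs_nonneg ((a + b) / 2)]

lemma sq_le_max_sq_of_abs_le {a b r : ℝ} (hr : |r| ≤ max |a| |b|) : r ^ 2 ≤ max (a ^ 2) (b ^ 2) := by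
  have h := pow_le_pow_left₀ (abs_nonneg r) hr 2
  rw [sq_abs] at h
  rcases le_total |a| |b| with hab | hab
  · rw [max_eq_right hab, sq_abs] at h
    exact h.trans (le_max_right _ _)
  · rw [max_eq_left hab, sq_abs] at h
    exact h.trans (le_max_left _ _)

lemma div_mem_Icc_of_mem_Icc_min_max {g j : ℝ} (hj : j ≠ 0)
    (hg : g ∈ Icc (min 0 j) (max 0 j)) : g / j ∈ Icc 0 1 := by
  rcases hj.lt_or_gt with hj | hj
  · rw [min_eq_right hj.le, max_eq_left hj.le] at hg
    exact ⟨div_nonneg_of_nonpos hg.2 hj.le, (div_le_one_of_neg hj).2 hg.1⟩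
  · rw [min_eq_left hj.le, max_eq_right hj.le] at hg
    exact ⟨div_nonneg hg.1 hj.le, (div_le_one hj).2 hg.2⟩

lemma grp_correction_mem_Icc {a b j ν g r : ℝ} (hj : j ≠ 0) (hν : 0 ≤ ν)
    (hg : g ∈ Icc (min 0 j) (max 0 j)) (hr : |r| ≤ max |a| |b|) :
    ν * r ^ 2 * g / j ∈ Icc 0 (ν * max (a ^ 2) (b ^ 2)) := by
  obtain ⟨h₀, h₁⟩ := div_mem_Icc_of_mem_Icc_min_max hj hg
  have hνr : 0 ≤ ν * r ^ 2 := by positivity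
  rw [mul_div_assoc]
  exact ⟨mul_nonneg hνr h₀, by
    nlinarith [mul_le_mul_of_nonneg_left (sq_le_max_sq_of_abs_le hr) hν,
      mul_le_mul_of_nonneg_left h₁ hνr]⟩

/-- The coefficient `D` of the GRP flux, with the minmod reconstructions `r⁻ = a + g_K/2` and
`r⁺ = b - g_L/2`. -/
noncomputable def grpCoeff (a b gK gL : ℝ) : ℝ :=
  (fEC a b - fGod (a + gK / 2) (b - gL / 2)) / (b - a)

section grpCoeff

variable {a b gK gL : ℝ}

lemma grpCoeff_mem_Icc_of_lt (hba : b < a)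
    (hgK : gK ∈ Icc (min 0 (b - a)) (max 0 (b - a)))
    (hgL : gL ∈ Icc (min 0 (b - a)) (max 0 (b - a))) :
    grpCoeff a b gK gL ∈ Icc ((b - a) / 24) ((b - a) / 24 + max |a| |b| / 2) := by
  have hj : b - a < 0 := sub_neg.2 hba
  rw [min_eq_right hj.le, max_eq_left hj.le] at hgK hgL
  have hrm : |a + gK / 2| ≤ max |a| |b| := abs_le.2
    ⟨by linarith [hgK.1, neg_abs_le b, le_max_right |a| |b|],
     by linarith [hgK.2, le_abs_self a, le_max_left |a| |b|]⟩
  have hrp : |b - gL / 2| ≤ max |a| |b| := abs_le.2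
    ⟨by linarith [hgL.2, neg_abs_le b, le_max_right |a| |b|],
     by linarith [hgL.1, le_abs_self a, le_max_left |a| |b|]⟩
  have hlow : ((a + b) / 2) ^ 2 / 2 ≤ fGod (a + gK / 2) (b - gL / 2) :=
    half_sq_le_fGod_of_le_of_le (by linarith [hgL.1]) (by linarith [hgK.1])
  have hhigh := fGod_le_of_abs_le hrm hrp
  have hM := sq_max_abs_le_sq_midpoint_add a b
  rw [abs_of_neg hj] at hM
  unfold grpCoeff
  rw [fEC_eq]
  constructor
  · rw [le_div_iff_of_neg hj]; nlinarith
  · rw [div_le_iff_of_neg hj]; nlinarith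

lemma grpCoeff_mem_Icc_of_gt (hab : a < b)
    (hgK : gK ∈ Icc (min 0 (b - a)) (max 0 (b - a)))
    (hgL : gL ∈ Icc (min 0 (b - a)) (max 0 (b - a))) :
    grpCoeff a b gK gL ∈ Icc ((b - a) / 24) ((b - a) / 6 + max |a| |b| / 2) := by
  have hj : 0 < b - a := sub_pos.2 hab
  rw [min_eq_left hj.le, max_eq_right hj.le] at hgK hgL
  have hhigh : fGod (a + gK / 2) (b - gL / 2) ≤ ((a + b) / 2) ^ 2 / 2 :=
    fGod_le_half_sq_of_le_of_le (by linarith [hgK.2]) (by linarith [hgL.2])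
  have hlow : ((a + b) / 2) ^ 2 / 2 - (b - a) / 2 * |(a + b) / 2| - ((b - a) / 2) ^ 2 / 2
      ≤ fGod (a + gK / 2) (b - gL / 2) :=
    half_sq_sub_le_fGod (by linarith [hgK.2]) (by linarith [hgL.2]) (by linarith [hgK.1])
      (by linarith [hgL.1])
  have hm := abs_midpoint_le_max_abs a b
  unfold grpCoeff
  rw [fEC_eq]
  constructor
  · rw [le_div_iff₀ hj]; nlinarith
  · rw [div_le_iff₀ hj]; nlinarith

end grpCoeff

theorem stmt_8 (uK uL j : ℝ) (hj : j = uL - uK) (hjne : j ≠ 0)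
    (gK gL : ℝ)
    (hgK : gK ∈ Set.Icc (min 0 j) (max 0 j))
    (hgL : gL ∈ Set.Icc (min 0 j) (max 0 j))
    (rm rp : ℝ) (hrm : rm = uK + gK / 2) (hrp : rp = uL - gL / 2)
    (D : ℝ) (hD : D = (fEC uK uL - fGod rm rp) / j)
    (ν : ℝ) (hν : 0 ≤ ν)
    (g : ℝ) (hg : g ∈ Set.Icc (min 0 j) (max 0 j))
    (r : ℝ) (hr : |r| ≤ max |uK| |uL|)
    (Dσ : ℝ) (hDσ : Dσ = D + ν * r^2 * g / j)
    (C₁ : ℝ) (hC₁ : C₁ ∈ Set.Ioc (0:ℝ) (1/24))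
    (DNew : ℝ)
    (hDNewNeg : j < 0 → DNew = Dσ + (1/24 + C₁) * |j|)
    (hDNewPos : 0 < j → DNew = Dσ) :
    C₁ * |j| ≤ DNew ∧
      DNew ≤ (1/6) * |j| + (7/8) * max |uK| |uL| + ν * max (uK^2) (uL^2) := by
  obtain ⟨hV₀, hV⟩ := grp_correction_mem_Icc hjne hν hg hr
  subst hj hrm hrp hD hDσ
  have hC₁j : C₁ * |uL - uK| ≤ |uL - uK| / 24 := by
    linarith [mul_le_mul_of_nonneg_right hC₁.2 (abs_nonneg (uL - uK))]
  have hM : 0 ≤ max |uK| |uL| := le_max_of_le_left (abs_nonneg uK)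
  rcases hjne.lt_or_gt with hneg | hpos
  · obtain ⟨hlo, hhi⟩ := grpCoeff_mem_Icc_of_lt (sub_neg.1 hneg) hgK hgL
    rw [abs_of_neg hneg] at hC₁j
    rw [hDNewNeg hneg, abs_of_neg hneg]
    unfold grpCoeff at hlo hhi
    constructor <;> linarith
  · obtain ⟨hlo, hhi⟩ := grpCoeff_mem_Icc_of_gt (sub_pos.1 hpos) hgK hgL
    rw [abs_of_pos hpos] at hC₁j
    rw [hDNewPos hpos, abs_of_pos hpos]
    unfold grpCoeff at hlo hhi
    constructor <;> linarith
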